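/- Fix an integer l ≥ 1 and set μ_l = πl²/2. Define S: ℝ → ℝ by S(x) = sinh(√(2πx))/√(2πx) for x > 0, S(0) = 1, and S(x) = sin(√(2π|x|))/√(2π|x|) for x < 0. Then for every real x ≠ −μ_l, |2 μ_l S(x) / (x + μ_l)| is at most 2 e^{√(2πx)} for x > 0, at most 4 for −μ_l/2 ≤ x ≤ 0, and at most 2 for x < −μ_l/2; in particular |2 μ_l S(x) / (x + μ_l)| ≤ 4 e^{√(2π max(x,0))} for every real x ≠ −μ_l. -/

import Mathlib

open Real Set

/-- The entire function `sinh(√(2πz))/√(2πz)` restricted to the real line: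
`S(x) = sinh(√(2πx))/√(2πx)` for `x > 0`, `S(0) = 1`, and
`S(x) = sin(√(2π|x|))/√(2π|x|)` for `x < 0`. -/
noncomputable def sinhcS (x : ℝ) : ℝ :=
  if 0 < x then Real.sinh (Real.sqrt (2 * π * x)) / Real.sqrt (2 * π * x)
  else if x < 0 then Real.sin (Real.sqrt (2 * π * |x|)) / Real.sqrt (2 * π * |x|)
  else 1

lemma aux_sinh_le (s : ℝ) (hs : 0 ≤ s) : Real.sinh s ≤ s * Real.exp s := by
  have h1 := Real.add_one_le_exp (-(2*s))
  have h2 : Real.exp (-(2*s)) = Real.exp (-s) * Real.exp (-s) := by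
    rw [← Real.exp_add]; ring_nf
  have h3 : Real.exp (-s) * Real.exp s = 1 := by
    rw [← Real.exp_add]; simp
  have h4 := Real.exp_pos (-s); have h5 := Real.exp_pos s
  rw [Real.sinh_eq]
  nlinarith [mul_pos h4 h5, mul_pos h5 h5, sq_nonneg (Real.exp s - Real.exp (-s))]

lemma aux_sin_le (t : ℝ) (l : ℕ) : |Real.sin t| ≤ |(l:ℝ) * π - t| := by
  have h := Real.sin_add_nat_mul_pi (t - l * π) l
  have ht : (t - l*π) + l*π = t := by ring
  rw [ht] at h
  calc |Real.sin t| = |(-1:ℝ)^l * Real.sin (t - l*π)| := by rw [h]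
    _ = |Real.sin (t - l*π)| := by rw [abs_mul, abs_pow, abs_neg, abs_one, one_pow, one_mul]
    _ ≤ |t - l*π| := Real.abs_sin_le_abs
    _ = |(l:ℝ)*π - t| := abs_sub_comm _ _

/-- Growth estimates on the real line for the canonical interpolating product
`P_l(x) = 2(-1)^{l+1} μ_l S(x)/(x+μ_l)`, `μ_l = πl²/2`:
`|2μ_l S(x)/(x+μ_l)| ≤ 4 e^{√(2π max(x,0))}`, and more precisely it is at most
`2 e^{√(2πx)}` for `x > 0`, at most `4` for `-μ_l/2 ≤ x ≤ 0`, and at most `2`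
for `x < -μ_l/2`. -/
theorem canonical_product_bounds
    (l : ℕ) (hl : 1 ≤ l) (μ : ℝ) (hμ : μ = π * (l : ℝ) ^ 2 / 2)
    (x : ℝ) (hx : x ≠ -μ) :
    |2 * μ * sinhcS x / (x + μ)| ≤ 4 * Real.exp (Real.sqrt (2 * π * max x 0)) ∧
    (0 < x → |2 * μ * sinhcS x / (x + μ)| ≤ 2 * Real.exp (Real.sqrt (2 * π * x))) ∧
    (-μ / 2 ≤ x → x ≤ 0 → |2 * μ * sinhcS x / (x + μ)| ≤ 4) ∧
    (x < -μ / 2 → |2 * μ * sinhcS x / (x + μ)| ≤ 2) := by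
  have hπ := Real.pi_pos
  have hl1 : (1:ℝ) ≤ (l:ℝ) := by exact_mod_cast hl
  have hl2 : (1:ℝ) ≤ (l:ℝ)^2 := by nlinarith
  have hμ0 : 0 < μ := by rw [hμ]; nlinarith
  have hA : 0 < x → |2 * μ * sinhcS x / (x + μ)| ≤ 2 * Real.exp (Real.sqrt (2 * π * x)) := by
    intro hx0
    set s := Real.sqrt (2*π*x) with hsdef
    have hs0 : 0 < s := Real.sqrt_pos.2 (by positivity)
    have hS : sinhcS x = Real.sinh s / s := by
      unfold sinhcS; rw [if_pos hx0]
    have hxμ : 0 < x + μ := by linarith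
    have hsinh : 0 ≤ Real.sinh s := Real.sinh_nonneg_iff.2 hs0.le
    have hnn : 0 ≤ 2 * μ * sinhcS x / (x + μ) := by
      rw [hS]; positivity
    rw [abs_of_nonneg hnn, hS, div_le_iff₀ hxμ]
    have h1 : Real.sinh s ≤ s * Real.exp s := aux_sinh_le s hs0.le
    have h2 : Real.sinh s / s ≤ Real.exp s := by
      rw [div_le_iff₀ hs0]; linarith [mul_comm s (Real.exp s)]
    have h3 : 0 ≤ Real.sinh s / s := by positivity
    nlinarith [Real.exp_pos s]
  have hB : -μ / 2 ≤ x → x ≤ 0 → |2 * μ * sinhcS x / (x + μ)| ≤ 4 := by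
    intro h1 h2
    rcases eq_or_lt_of_le h2 with rfl | hx0
    · have : sinhcS 0 = 1 := by simp [sinhcS]
      rw [this]
      have : 2 * μ * 1 / (0 + μ) = 2 := by field_simp; ring
      rw [this]; norm_num
    · set t := Real.sqrt (2*π*|x|) with htdef
      have ht0 : 0 < t := Real.sqrt_pos.2 (mul_pos (by positivity) (abs_pos.2 hx0.ne))
      have hS : sinhcS x = Real.sin t / t := by
        unfold sinhcS; rw [if_neg (not_lt.2 hx0.le), if_pos hx0]
      have hxμ : 0 < x + μ := by linarith
      have hsin : |Real.sin t| ≤ t := by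
        calc |Real.sin t| ≤ |t| := Real.abs_sin_le_abs
          _ = t := abs_of_pos ht0
      rw [hS, abs_div, abs_of_pos hxμ, div_le_iff₀ hxμ, abs_mul, abs_div,
        abs_of_pos ht0, abs_of_pos (by positivity : (0:ℝ) < 2*μ)]
      have : |Real.sin t| / t ≤ 1 := by rw [div_le_one ht0]; exact hsin
      nlinarith [abs_nonneg (Real.sin t), div_nonneg (abs_nonneg (Real.sin t)) ht0.le]
  have hC : x < -μ / 2 → |2 * μ * sinhcS x / (x + μ)| ≤ 2 := by
    intro hxlt
    have hx0 : x < 0 := by linarith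
    set t := Real.sqrt (2*π*|x|) with htdef
    have ht0 : 0 < t := Real.sqrt_pos.2 (mul_pos (by positivity) (abs_pos.2 hx0.ne))
    have hS : sinhcS x = Real.sin t / t := by
      unfold sinhcS; rw [if_neg (not_lt.2 hx0.le), if_pos hx0]
    have ht2 : t^2 = 2*π*(-x) := by
      rw [htdef, Real.sq_sqrt (by positivity), abs_of_neg hx0]
    have hxμne : x + μ ≠ 0 := fun h => hx (by linarith)
    have hμval : 2*π*μ = ((l:ℝ)*π)^2 := by rw [hμ]; ring
    have key : (2*π) * (x+μ) = ((l:ℝ)*π)^2 - t^2 := by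
      rw [ht2]; linarith [hμval]
    set A := |(l:ℝ)*π - t| with hAdef
    have hA0 : 0 ≤ A := abs_nonneg _
    have hlπ : 0 < (l:ℝ)*π := by positivity
    have hprod : 2*π*|x + μ| = A * ((l:ℝ)*π + t) := by
      have h1 : |2*π*(x+μ)| = 2*π*|x + μ| := by
        rw [abs_mul, abs_of_pos (by positivity : (0:ℝ) < 2*π)]
      rw [← h1, key, show ((l:ℝ)*π)^2 - t^2 = ((l:ℝ)*π - t) * ((l:ℝ)*π + t) by ring,
        abs_mul, abs_of_pos (by positivity : (0:ℝ) < (l:ℝ)*π + t)]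
    -- t^2 > (lπ)^2/2
    have ht2big : ((l:ℝ)*π)^2 / 2 < t^2 := by
      rw [ht2]
      have : μ/2 < -x := by linarith
      nlinarith [hμval]
    have hta : (l:ℝ)*π ≤ 2*t := by nlinarith
    have hkey : ((l:ℝ)*π)^2 ≤ t * ((l:ℝ)*π + t) := by nlinarith
    have hsin : |Real.sin t| ≤ A := aux_sin_le t l
    rw [hS, abs_div, div_le_iff₀ (abs_pos.2 hxμne), abs_mul, abs_div,
      abs_of_pos ht0, abs_of_pos (by positivity : (0:ℝ) < 2*μ)]
    -- goal: 2*μ*(|sin t|/t) ≤ 2*|x + μ|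
    have hrw : 2*μ*(|Real.sin t|/t) = (2*μ*|Real.sin t|)/t := by ring
    rw [hrw, div_le_iff₀ ht0]
    -- goal: 2*μ*|sin t| ≤ 2*|x + μ| * t
    have h2 : ((l:ℝ)*π)^2 * |Real.sin t| ≤ ((l:ℝ)*π)^2 * A :=
      mul_le_mul_of_nonneg_left hsin (by positivity)
    have h3 : ((l:ℝ)*π)^2 * A ≤ (t * ((l:ℝ)*π + t)) * A :=
      mul_le_mul_of_nonneg_right hkey hA0
    have h1t : 2*π*(|x + μ| * t) = A * ((l:ℝ)*π + t) * t := by linear_combination t * hprod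
    have step : 2*π*μ*|Real.sin t| ≤ 2*π*(|x + μ| * t) := by
      calc 2*π*μ*|Real.sin t| = ((l:ℝ)*π)^2*|Real.sin t| := by rw [hμval]
        _ ≤ ((l:ℝ)*π)^2*A := h2
        _ ≤ t*((l:ℝ)*π+t)*A := h3
        _ = A*((l:ℝ)*π+t)*t := by ring
        _ = 2*π*(|x + μ| * t) := h1t.symm
    have step' : π * (2*μ*|Real.sin t|) ≤ π * (2*(|x + μ| * t)) := by
      calc π*(2*μ*|Real.sin t|) = 2*π*μ*|Real.sin t| := by ring
        _ ≤ 2*π*(|x + μ| * t) := step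
        _ = π*(2*(|x + μ| * t)) := by ring
    have hfin := le_of_mul_le_mul_left step' hπ
    linarith [hfin]
  refine ⟨?_, hA, hB, hC⟩
  rcases le_or_gt x 0 with h | h
  · have hmax : max x 0 = 0 := max_eq_right h
    rw [hmax, mul_zero, Real.sqrt_zero, Real.exp_zero, mul_one]
    rcases le_or_gt (-μ/2) x with h' | h'
    · exact hB h' h
    · linarith [hC h']
  · have hmax : max x 0 = x := max_eq_left h.le
    rw [hmax]
    have := hA h
    nlinarith [Real.exp_pos (Real.sqrt (2*π*x))]
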